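/- For all n ≥ 1, p(q(n)) = p(n) + q(n). -/

import Mathlib

/-!
Both sequences are strictly increasing and, by construction, the values `p i` and `q j`
(`i, j ≥ 1`) partition the positive integers. Hence, writing `#p(N)` and `#q(N)` for the number
of indices `i ≥ 1` with `p i ≤ N`, resp. `q i ≤ N`, we have `#p(N) + #q(N) = N` for every `N`.
At `N = q n - 1` exactly `n - 1` values of `q` lie below, so `#p(q n - 1) = p n`, which pins down
`p (p n) < q n ≤ p (p n + 1)`. With `M = p n + q n` this gives `q (p n) < M < q (p n + 1)`, so
`#q(M - 1) = #q(M) = p n`, whence `#p(M - 1) = q n - 1` and `#p(M) = q n`, i.e. `p (q n) = M`.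
-/

open Finset

-- Counts all indices `i ≥ 1` with `f i ≤ N` as soon as `i ≤ f i` for all `i ≥ 1`.
def countLE (f : ℕ → ℕ) (N : ℕ) : ℕ := #{i ∈ Icc 1 N | f i ≤ N}

section countLE

variable {f g : ℕ → ℕ} {N : ℕ}

theorem le_countLE_iff (hf : MonotoneOn f (Set.Ici 1)) (hid : ∀ i, 1 ≤ i → i ≤ f i) {k : ℕ}
    (hk : 1 ≤ k) : k ≤ countLE f N ↔ f k ≤ N := by
  constructor
  · intro hkN
    by_contra! hlt
    have hsub : {i ∈ Icc 1 N | f i ≤ N} ⊆ Icc 1 (k - 1) := by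
      intro i hi
      simp only [mem_filter, mem_Icc] at hi ⊢
      refine ⟨hi.1.1, ?_⟩
      by_contra! hki
      have := hf (Set.mem_Ici.2 hk) (Set.mem_Ici.2 hi.1.1) (by omega : k ≤ i)
      omega
    have := card_le_card hsub
    simp only [Nat.card_Icc] at this
    unfold countLE at hkN
    omega
  · intro hkN
    have hsub : Icc 1 k ⊆ {i ∈ Icc 1 N | f i ≤ N} := by
      intro i hi
      simp only [mem_filter, mem_Icc] at hi ⊢
      have := hf (Set.mem_Ici.2 hi.1) (Set.mem_Ici.2 hk) hi.2
      have := hid i hi.1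
      omega
    simpa [countLE] using card_le_card hsub

theorem countLE_eq_of_forall_le_iff (hf : MonotoneOn f (Set.Ici 1))
    (hid : ∀ i, 1 ≤ i → i ≤ f i) {k : ℕ} (hk : ∀ i, 1 ≤ i → (f i ≤ N ↔ i ≤ k)) :
    countLE f N = k := by
  have hiff : ∀ i, 1 ≤ i → (i ≤ countLE f N ↔ i ≤ k) := fun i hi =>
    (le_countLE_iff hf hid hi).trans (hk i hi)
  rcases Nat.eq_zero_or_pos (countLE f N) with h0 | hpos
  · rcases Nat.eq_zero_or_pos k with hk0 | hkpos
    · omega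
    · have := (hiff k hkpos).2 le_rfl
      omega
  · have h1 := (hiff _ hpos).1 le_rfl
    have h2 := (hiff k (by omega)).2 le_rfl
    omega

theorem countLE_add_countLE (hf : Set.InjOn f (Set.Ici 1)) (hg : Set.InjOn g (Set.Ici 1))
    (hfid : ∀ i, 1 ≤ i → i ≤ f i) (hgid : ∀ i, 1 ≤ i → i ≤ g i)
    (hfg : ∀ i j, 1 ≤ i → 1 ≤ j → f i ≠ g j)
    (hcover : ∀ m, 0 < m → ∃ i, 1 ≤ i ∧ (f i = m ∨ g i = m)) :
    countLE f N + countLE g N = N := by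
  have hcard : ∀ φ : ℕ → ℕ, Set.InjOn φ (Set.Ici 1) →
      #({i ∈ Icc 1 N | φ i ≤ N}.image φ) = countLE φ N := fun φ hφ =>
    card_image_of_injOn (hφ.mono fun i hi => by simp_all)
  have hunion : {i ∈ Icc 1 N | f i ≤ N}.image f ∪ {i ∈ Icc 1 N | g i ≤ N}.image g =
      Icc 1 N := by
    ext m
    simp only [mem_union, mem_image, mem_filter, mem_Icc]
    constructor
    · rintro (⟨i, ⟨⟨hi, -⟩, hiN⟩, rfl⟩ | ⟨i, ⟨⟨hi, -⟩, hiN⟩, rfl⟩)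
      · exact ⟨hi.trans (hfid i hi), hiN⟩
      · exact ⟨hi.trans (hgid i hi), hiN⟩
    · rintro ⟨hm, hmN⟩
      obtain ⟨i, hi, rfl | rfl⟩ := hcover m hm
      · exact .inl ⟨i, ⟨⟨hi, (hfid i hi).trans hmN⟩, hmN⟩, rfl⟩
      · exact .inr ⟨i, ⟨⟨hi, (hgid i hi).trans hmN⟩, hmN⟩, rfl⟩
  have hdisj : Disjoint ({i ∈ Icc 1 N | f i ≤ N}.image f) ({i ∈ Icc 1 N | g i ≤ N}.image g) := by
    simp only [disjoint_left, mem_image, mem_filter, mem_Icc]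
    rintro m ⟨i, ⟨⟨hi, -⟩, -⟩, rfl⟩ ⟨j, ⟨⟨hj, -⟩, -⟩, hji⟩
    exact hfg i j hi hj hji.symm
  rw [← hcard f hf, ← hcard g hg, ← card_union_of_disjoint hdisj, hunion, Nat.card_Icc,
    Nat.add_sub_cancel]

end countLE

structure IsWythoffPair (p q : ℕ → ℕ) : Prop where
  p_one : p 1 = 1
  q_eq : ∀ n, 1 ≤ n → q n = p n + n
  isLeast : ∀ n, 1 ≤ n →
    IsLeast {m : ℕ | 0 < m ∧ ∀ i, 1 ≤ i → i ≤ n → m ≠ p i ∧ m ≠ q i} (p (n + 1))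

namespace IsWythoffPair

variable {p q : ℕ → ℕ}

theorem le_of_forall_ne (h : IsWythoffPair p q) {n m : ℕ} (hn : 1 ≤ n) (hm : 0 < m)
    (hne : ∀ i, 1 ≤ i → i < n → m ≠ p i ∧ m ≠ q i) : p n ≤ m := by
  rcases n with _ | _ | k
  · omega
  · rw [h.p_one]; exact hm
  · exact (h.isLeast (k + 1) (by omega)).2 ⟨hm, fun i hi hik => hne i hi (by omega)⟩

theorem pos (h : IsWythoffPair p q) {n : ℕ} (hn : 1 ≤ n) : 0 < p n := by
  rcases n with _ | _ | k
  · omega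
  · simp [h.p_one]
  · exact (h.isLeast (k + 1) (by omega)).1.1

theorem ne_p_and_ne_q_of_lt (h : IsWythoffPair p q) {i n : ℕ} (hi : 1 ≤ i) (hin : i < n) :
    p n ≠ p i ∧ p n ≠ q i := by
  obtain ⟨k, rfl⟩ : ∃ k, n = k + 1 := ⟨n - 1, by omega⟩
  exact (h.isLeast k (by omega)).1.2 i hi (by omega)

theorem lt_succ (h : IsWythoffPair p q) {n : ℕ} (hn : 1 ≤ n) : p n < p (n + 1) := by
  have hle : p n ≤ p (n + 1) :=
    h.le_of_forall_ne hn (h.pos (by omega)) fun i hi hin => h.ne_p_and_ne_q_of_lt hi (by omega)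
  exact hle.lt_of_ne (h.ne_p_and_ne_q_of_lt hn (by omega)).1.symm

theorem strictMonoOn (h : IsWythoffPair p q) : StrictMonoOn p (Set.Ici 1) :=
  strictMonoOn_of_lt_add_one Set.ordConnected_Ici fun _ _ ha _ => h.lt_succ ha

theorem self_le (h : IsWythoffPair p q) {n : ℕ} (hn : 1 ≤ n) : n ≤ p n := by
  induction n, hn using Nat.le_induction with
  | base => rw [h.p_one]
  | succ n hn ih => exact ih.trans_lt (h.lt_succ hn)

theorem strictMonoOn_q (h : IsWythoffPair p q) : StrictMonoOn q (Set.Ici 1) := by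
  intro i hi j hj hij
  have := h.strictMonoOn hi hj hij
  rw [h.q_eq i hi, h.q_eq j hj]
  omega

theorem self_le_q (h : IsWythoffPair p q) {n : ℕ} (hn : 1 ≤ n) : n ≤ q n := by
  rw [h.q_eq n hn]; omega

theorem p_ne_q (h : IsWythoffPair p q) {i j : ℕ} (hi : 1 ≤ i) (hj : 1 ≤ j) : p i ≠ q j := by
  rcases le_or_gt i j with hij | hji
  · have := h.strictMonoOn.monotoneOn hi hj hij
    rw [h.q_eq j hj]
    omega
  · exact (h.ne_p_and_ne_q_of_lt hj hji).2

theorem exists_eq (h : IsWythoffPair p q) {m : ℕ} (hm : 0 < m) :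
    ∃ i, 1 ≤ i ∧ (p i = m ∨ q i = m) := by
  by_contra! hne
  have hle := h.le_of_forall_ne (n := m + 1) (by omega) hm fun i hi _ =>
    ⟨(hne i hi).1.symm, (hne i hi).2.symm⟩
  have := h.self_le (n := m + 1) (by omega)
  omega

theorem countLE_add_countLE (h : IsWythoffPair p q) (N : ℕ) :
    countLE p N + countLE q N = N :=
  _root_.countLE_add_countLE h.strictMonoOn.injOn h.strictMonoOn_q.injOn (fun _ => h.self_le)
    (fun _ => h.self_le_q) (fun _ _ => h.p_ne_q) (fun _ => h.exists_eq)

theorem le_countLE_iff (h : IsWythoffPair p q) {k N : ℕ} (hk : 1 ≤ k) :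
    k ≤ countLE p N ↔ p k ≤ N :=
  _root_.le_countLE_iff h.strictMonoOn.monotoneOn (fun _ => h.self_le) hk

theorem countLE_p_q_sub_one (h : IsWythoffPair p q) {n : ℕ} (hn : 1 ≤ n) :
    countLE p (q n - 1) = p n := by
  have hq : countLE q (q n - 1) = n - 1 :=
    countLE_eq_of_forall_le_iff h.strictMonoOn_q.monotoneOn (fun _ => h.self_le_q) fun i hi => by
      have := h.strictMonoOn_q.lt_iff_lt (Set.mem_Ici.2 hi) (Set.mem_Ici.2 hn)
      have := h.self_le_q hn
      omega
  have := h.countLE_add_countLE (q n - 1)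
  have := h.q_eq n hn
  omega

theorem countLE_q_eq_p (h : IsWythoffPair p q) {n N : ℕ} (hn : 1 ≤ n)
    (hN : p n + q n - 1 ≤ N) (hN' : N ≤ p n + q n) : countLE q N = p n := by
  have hpn := h.pos hn
  have hqn := h.self_le_q hn
  have hcount := h.countLE_p_q_sub_one hn
  have hlo : p (p n) ≤ q n - 1 := (h.le_countLE_iff hpn).1 hcount.ge
  have hhi : ¬ p (p n + 1) ≤ q n - 1 := fun hle => by
    have := (h.le_countLE_iff (by omega)).2 hle
    omega
  refine countLE_eq_of_forall_le_iff h.strictMonoOn_q.monotoneOn (fun _ => h.self_le_q)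
    fun i hi => ⟨fun hiN => ?_, fun hin => ?_⟩
  · by_contra! hlt
    have := h.strictMonoOn_q.monotoneOn (Set.mem_Ici.2 (by omega)) (Set.mem_Ici.2 hi)
      (show p n + 1 ≤ i by omega)
    rw [h.q_eq _ (by omega)] at this
    omega
  · have := h.strictMonoOn_q.monotoneOn (Set.mem_Ici.2 hi) (Set.mem_Ici.2 hpn) hin
    rw [h.q_eq _ hpn] at this
    omega

end IsWythoffPair

/-- Wythoff sequences: `p 1 = 1`, `q n = p n + n` for `n ≥ 1`, and `p (n+1)` is the
smallest positive integer not contained in `U_n = {p 1, …, p n, q 1, …, q n}`. -/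
theorem stmt_10 (p q : ℕ → ℕ)
    (hp1 : p 1 = 1)
    (hq : ∀ n, 1 ≤ n → q n = p n + n)
    (hmin : ∀ n, 1 ≤ n →
      IsLeast {m : ℕ | 0 < m ∧ ∀ i, 1 ≤ i → i ≤ n → m ≠ p i ∧ m ≠ q i} (p (n + 1))) :
    ∀ n, 1 ≤ n → p (q n) = p n + q n := by
  intro n hn
  have h : IsWythoffPair p q := ⟨hp1, hq, hmin⟩
  have hqn : 1 ≤ q n := hn.trans (h.self_le_q hn)
  have hM := h.countLE_add_countLE (p n + q n)
  have hM' := h.countLE_add_countLE (p n + q n - 1)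
  rw [h.countLE_q_eq_p hn (by omega) le_rfl] at hM
  rw [h.countLE_q_eq_p hn le_rfl (by omega)] at hM'
  have hle : p (q n) ≤ p n + q n := (h.le_countLE_iff hqn).1 (by omega)
  have hgt : ¬ p (q n) ≤ p n + q n - 1 := fun hle' => by
    have := (h.le_countLE_iff hqn).2 hle'
    omega
  omega
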